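/- Let X be a proper submodule of M with φ(X) a submodule of M (φ(X) ≠ ∅). Then X is a φ-prime submodule of M if and only if X/φ(X) is a weakly prime submodule of M/φ(X). -/

import Mathlib

open MulOpposite Submodule

variable {R : Type*} [Ring R] {M : Type*} [AddCommGroup M] [Module Rᵐᵒᵖ M]

/-- The product `Y·A` of a set of elements of a right `R`-module `M` and a set of ring
elements: the submodule of all finite sums `Σ yᵢ·aᵢ` with `yᵢ ∈ Y`, `aᵢ ∈ A`. -/
def sProd (Y : Set M) (A : Set R) : Submodule Rᵐᵒᵖ M :=
  Submodule.span Rᵐᵒᵖ {z | ∃ y ∈ Y, ∃ a ∈ A, z = op a • y}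
/-- `(X :_R N) = {r : R | N·r ⊆ X}`. -/
def colR (X : Set M) (N : Set M) : Set R := {r | ∀ m ∈ N, op r • m ∈ X}

/-- `(X :_M A) = {m : M | m·A ⊆ X}`. -/
def colM (X : Set M) (A : Set R) : Set M := {m | ∀ r ∈ A, op r • m ∈ X}

/-- A function `φ : S(M) → S(M) ∪ {∅}` (values are either `∅` or submodules) with
`φ(X) ⊆ X` for every submodule `X`. -/
def GoodPhi (φ : Submodule Rᵐᵒᵖ M → Set M) : Prop :=
  ∀ N : Submodule Rᵐᵒᵖ M, φ N ⊆ N ∧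
    (φ N = (∅ : Set M) ∨ ∃ P : Submodule Rᵐᵒᵖ M, φ N = (P : Set M))

/-- `X` is a φ-prime submodule of the right `R`-module `M`. -/
def PhiPrime (φ : Submodule Rᵐᵒᵖ M → Set M) (X : Submodule Rᵐᵒᵖ M) : Prop :=
  X ≠ ⊤ ∧ ∀ (Y : Submodule Rᵐᵒᵖ M) (I : TwoSidedIdeal R),
    (sProd (Y : Set M) (I : Set R) : Set M) ⊆ (X : Set M) →
    ¬((sProd (Y : Set M) (I : Set R) : Set M) ⊆ φ X) →
    (Y : Set M) ⊆ (X : Set M) ∨ (I : Set R) ⊆ colR (X : Set M) Set.univ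

/-- `X` is a prime submodule of the right `R`-module `M`. -/
def PrimeSub (X : Submodule Rᵐᵒᵖ M) : Prop :=
  X ≠ ⊤ ∧ ∀ (Y : Submodule Rᵐᵒᵖ M) (I : TwoSidedIdeal R),
    (sProd (Y : Set M) (I : Set R) : Set M) ⊆ (X : Set M) →
    (Y : Set M) ⊆ (X : Set M) ∨ (I : Set R) ⊆ colR (X : Set M) Set.univ

/-- `X` is a weakly prime submodule of the right `R`-module `M`. -/
def WeaklyPrime (X : Submodule Rᵐᵒᵖ M) : Prop :=
  X ≠ ⊤ ∧ ∀ (Y : Submodule Rᵐᵒᵖ M) (I : TwoSidedIdeal R),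
    sProd (Y : Set M) (I : Set R) ≠ ⊥ →
    (sProd (Y : Set M) (I : Set R) : Set M) ⊆ (X : Set M) →
    (Y : Set M) ⊆ (X : Set M) ∨ (I : Set R) ⊆ colR (X : Set M) Set.univ

/-- `X` is an almost prime submodule of the right `R`-module `M`. -/
def AlmostPrime (X : Submodule Rᵐᵒᵖ M) : Prop :=
  X ≠ ⊤ ∧ ∀ (Y : Submodule Rᵐᵒᵖ M) (I : TwoSidedIdeal R),
    (sProd (Y : Set M) (I : Set R) : Set M) ⊆ (X : Set M) →
    ¬((sProd (Y : Set M) (I : Set R) : Set M) ⊆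
        (sProd (X : Set M) ((colR (X : Set M) Set.univ : Set R)) : Set M)) →
    (Y : Set M) ⊆ (X : Set M) ∨ (I : Set R) ⊆ colR (X : Set M) Set.univ

/-- `powAct X n = X (X :_R M)ⁿ`. -/
def powAct (X : Submodule Rᵐᵒᵖ M) : ℕ → Submodule Rᵐᵒᵖ M
  | 0 => X
  | n + 1 => sProd (powAct X n : Set M) ((colR (X : Set M) Set.univ : Set R))

/-- The product of two sets of ring elements: all finite sums `Σ aᵢbᵢ`, `aᵢ ∈ A`, `bᵢ ∈ B`. -/
def idMul (A B : Set R) : Set R :=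
  (AddSubmonoid.closure {x | ∃ a ∈ A, ∃ b ∈ B, x = a * b} : AddSubmonoid R)

/-- A prime (two-sided) ideal of a possibly noncommutative ring. -/
def TIPrime (P : TwoSidedIdeal R) : Prop :=
  (P : Set R) ≠ Set.univ ∧ ∀ I J : TwoSidedIdeal R,
    idMul (I : Set R) (J : Set R) ⊆ (P : Set R) →
    (I : Set R) ⊆ (P : Set R) ∨ (J : Set R) ⊆ (P : Set R)

/-- The radical `√A`: the intersection of all prime two-sided ideals containing `A`. -/
def radSet (A : Set R) : Set R :=
  {x | ∀ P : TwoSidedIdeal R, TIPrime P → A ⊆ (P : Set R) → x ∈ (P : Set R)}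

/-- A ψ-prime two-sided ideal of a possibly noncommutative ring. -/
def PsiPrime (ψ : TwoSidedIdeal R → Set R) (A : TwoSidedIdeal R) : Prop :=
  (A : Set R) ≠ Set.univ ∧ ∀ I J : TwoSidedIdeal R,
    idMul (I : Set R) (J : Set R) ⊆ (A : Set R) →
    ¬(idMul (I : Set R) (J : Set R) ⊆ ψ A) →
    (I : Set R) ⊆ (A : Set R) ∨ (J : Set R) ⊆ (A : Set R)

/-- The induced function `φ_Y` on submodules of `M/Y`: `φ_Y(X/Y) = (φ(X)+Y)/Y`. -/
def phiQuot (φ : Submodule Rᵐᵒᵖ M → Set M) (Y : Submodule Rᵐᵒᵖ M) :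
    Submodule Rᵐᵒᵖ (M ⧸ Y) → Set (M ⧸ Y) :=
  fun Q => Y.mkQ '' (φ (Q.comap Y.mkQ))

/-- The colon `(X :_R Y)` of two submodules, as a two-sided ideal of `R`. -/
def colTI (X Y : Submodule Rᵐᵒᵖ M) : TwoSidedIdeal R :=
  TwoSidedIdeal.mk' (colR (X : Set M) (Y : Set M))
    (by intro m hm; simp)
    (by intro x y hx hy m hm
        rw [op_add, add_smul]
        exact X.add_mem (hx m hm) (hy m hm))
    (by intro x hx m hm
        rw [op_neg, neg_smul]
        exact X.neg_mem (hx m hm))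
    (by intro x y hy m hm
        rw [op_mul, mul_smul]
        exact hy _ (Y.smul_mem (op x) hm))
    (by intro x y hx m hm
        rw [op_mul, mul_smul]
        exact X.smul_mem (op y) (hx m hm))

/-- The colon `(X :_M I)` as a submodule of `M`, for a two-sided ideal `I`. -/
def colMS (X : Submodule Rᵐᵒᵖ M) (I : TwoSidedIdeal R) : Submodule Rᵐᵒᵖ M where
  carrier := colM (X : Set M) (I : Set R)
  add_mem' := by
    intro a b ha hb r hr
    rw [smul_add]
    exact X.add_mem (ha r hr) (hb r hr)
  zero_mem' := by
    intro r hr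
    rw [smul_zero]
    exact X.zero_mem
  smul_mem' := by
    intro c m hm r hr
    rw [← mul_smul, show op r * c = op (unop c * r) from by rw [op_mul, op_unop]]
    exact hm _ (I.mul_mem_left _ _ hr)

/-- `M` is a multiplication right `R`-module: every submodule `X` equals `M(X :_R M)`. -/
def IsMultiplication (R : Type*) [Ring R] (M : Type*) [AddCommGroup M]
    [Module Rᵐᵒᵖ M] : Prop :=
  ∀ X : Submodule Rᵐᵒᵖ M, X = sProd (Set.univ : Set M) ((colR (X : Set M) Set.univ : Set R))

/-- The product `XY = M(X :_R M)(Y :_R M)` of two submodules of a multiplication module. -/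
def mprod (X Y : Submodule Rᵐᵒᵖ M) : Submodule Rᵐᵒᵖ M :=
  sProd ((sProd (Set.univ : Set M) ((colR (X : Set M) Set.univ : Set R)) : Submodule Rᵐᵒᵖ M) : Set M)
    ((colR (Y : Set M) Set.univ : Set R))

/-- A φ-m-system in a right `R`-module `M`. -/
def PhiMSystem (φ : Submodule Rᵐᵒᵖ M → Set M) (S : Set M) : Prop :=
  S.Nonempty ∧ ∀ (Y₁ Y₂ : Submodule Rᵐᵒᵖ M) (I : TwoSidedIdeal R),
    ((Y₁ ⊔ Y₂ : Submodule Rᵐᵒᵖ M) : Set M) ∩ S ≠ ∅ →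
    ((Y₁ ⊔ sProd (Set.univ : Set M) (I : Set R) : Submodule Rᵐᵒᵖ M) : Set M) ∩ S ≠ ∅ →
    ¬((sProd (Y₂ : Set M) (I : Set R) : Set M) ⊆ φ (Submodule.span Rᵐᵒᵖ Sᶜ)) →
    ((Y₁ ⊔ sProd (Y₂ : Set M) (I : Set R) : Submodule Rᵐᵒᵖ M) : Set M) ∩ S ≠ ∅

/-!
Everything transfers along the quotient map `M → M/φ(X)`: since `φ(X) ≤ X`, submodules of
`M` containing `φ(X)` correspond to submodules of `M/φ(X)`, products `Y·I` commute with the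
quotient map, colon ideals agree, and `Y·I ⊆ φ(X)` says exactly that the image of `Y·I`
in `M/φ(X)` is zero. So the φ-prime condition for `X` on a pair `(Y, I)` is the weakly
prime condition for `X/φ(X)` on `(Y/φ(X), I)`, and every submodule of `M/φ(X)` has this form.
-/

theorem sProd_map {N : Type*} [AddCommGroup N] [Module Rᵐᵒᵖ N]
    (f : M →ₗ[Rᵐᵒᵖ] N) (Y : Set M) (A : Set R) :
    (sProd Y A).map f = sProd (f '' Y) A := by
  rw [sProd, sProd, Submodule.map_span]
  congr 1
  ext z
  constructor
  · rintro ⟨w, ⟨y, hy, a, ha, rfl⟩, rfl⟩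
    exact ⟨f y, ⟨y, hy, rfl⟩, a, ha, f.map_smul _ _⟩
  · rintro ⟨_, ⟨y, hy, rfl⟩, a, ha, rfl⟩
    exact ⟨op a • y, ⟨y, hy, a, ha, rfl⟩, f.map_smul _ _⟩

namespace Submodule

variable {P X : Submodule Rᵐᵒᵖ M}

theorem sProd_map_mkQ (Y : Submodule Rᵐᵒᵖ M) (A : Set R) :
    (sProd (Y : Set M) A).map P.mkQ =
      sProd ((Y.map P.mkQ : Submodule Rᵐᵒᵖ (M ⧸ P)) : Set (M ⧸ P)) A := by
  rw [sProd_map, Submodule.map_coe]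

theorem map_mkQ_eq_bot_iff {Z : Submodule Rᵐᵒᵖ M} : Z.map P.mkQ = ⊥ ↔ Z ≤ P := by
  rw [← LinearMap.le_ker_iff_map, ker_mkQ]

theorem map_mkQ_le_map_mkQ_iff (hPX : P ≤ X) {Z : Submodule Rᵐᵒᵖ M} :
    Z.map P.mkQ ≤ X.map P.mkQ ↔ Z ≤ X := by
  rw [LinearMap.map_le_map_iff, ker_mkQ, sup_eq_left.mpr hPX]

theorem mkQ_mem_map_mkQ_iff (hPX : P ≤ X) {m : M} : P.mkQ m ∈ X.map P.mkQ ↔ m ∈ X := by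
  rw [← Submodule.mem_comap, comap_map_mkQ, sup_eq_right.mpr hPX]

theorem map_mkQ_ne_top (hPX : P ≤ X) (hX : X ≠ ⊤) : X.map P.mkQ ≠ ⊤ := by
  rwa [Ne, map_mkQ_eq_top, sup_eq_right.mpr hPX]

theorem colR_map_mkQ (hPX : P ≤ X) :
    (colR ((X.map P.mkQ : Submodule Rᵐᵒᵖ (M ⧸ P)) : Set (M ⧸ P)) Set.univ : Set R) =
      colR (X : Set M) Set.univ := by
  ext r
  simp only [colR, Set.mem_univ, forall_const, Set.mem_ofPred_eq, SetLike.mem_coe]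
  rw [P.mkQ_surjective.forall]
  simp only [← map_smul, mkQ_mem_map_mkQ_iff hPX]

end Submodule

theorem phiPrime_condition_iff_map_mkQ {P X : Submodule Rᵐᵒᵖ M} (hPX : P ≤ X)
    (Y : Submodule Rᵐᵒᵖ M) (I : TwoSidedIdeal R) :
    ((sProd (Y : Set M) (I : Set R) : Set M) ⊆ X →
        ¬((sProd (Y : Set M) (I : Set R) : Set M) ⊆ P) →
        (Y : Set M) ⊆ X ∨ (I : Set R) ⊆ colR (X : Set M) Set.univ) ↔
      (sProd ((Y.map P.mkQ : Submodule Rᵐᵒᵖ (M ⧸ P)) : Set (M ⧸ P)) (I : Set R) ≠ ⊥ →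
        (sProd ((Y.map P.mkQ : Submodule Rᵐᵒᵖ (M ⧸ P)) : Set (M ⧸ P)) (I : Set R) :
            Set (M ⧸ P)) ⊆ X.map P.mkQ →
        ((Y.map P.mkQ : Submodule Rᵐᵒᵖ (M ⧸ P)) : Set (M ⧸ P)) ⊆ X.map P.mkQ ∨
          (I : Set R) ⊆ colR ((X.map P.mkQ : Submodule Rᵐᵒᵖ (M ⧸ P)) : Set (M ⧸ P))
            Set.univ) := by
  simp only [SetLike.coe_subset_coe, ← sProd_map_mkQ, ne_eq, map_mkQ_eq_bot_iff,
    map_mkQ_le_map_mkQ_iff hPX, colR_map_mkQ hPX]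
  tauto

/-- Let `X` be a proper submodule of `M` with `φ(X)` a submodule `P`
(in particular `φ(X) ≠ ∅`). Then `X` is φ-prime in `M` iff `X/φ(X)` is weakly prime
in `M/φ(X)`. -/
theorem stmt_8 (φ : Submodule Rᵐᵒᵖ M → Set M) (hφ : GoodPhi φ)
    (X : Submodule Rᵐᵒᵖ M) (hX : X ≠ ⊤)
    (P : Submodule Rᵐᵒᵖ M) (hP : φ X = (P : Set M)) :
    PhiPrime φ X ↔ WeaklyPrime (X.map P.mkQ) := by
  have hPX : P ≤ X := fun x hx => (hφ X).1 (hP ▸ hx)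
  rw [PhiPrime, WeaklyPrime, hP]
  constructor
  · rintro ⟨-, hprime⟩
    refine ⟨map_mkQ_ne_top hPX hX, fun Y' I => ?_⟩
    rw [← map_comap_eq_of_surjective P.mkQ_surjective Y']
    exact (phiPrime_condition_iff_map_mkQ hPX _ I).mp (hprime _ I)
  · rintro ⟨-, hweak⟩
    exact ⟨hX, fun Y I => (phiPrime_condition_iff_map_mkQ hPX Y I).mpr (hweak _ I)⟩
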